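/- arXiv:2303.03880 — 5 statements merged into one kernel-verified Lean document; each statement's English description precedes it below -/
import Mathlib

section
/- Fix a packet size d > 0 and an SNR γ > 0. Define the channel dispersion V(γ) = 1 − (1+γ)^{−2}, the Shannon capacity C(γ) = log₂(1+γ), the finite-blocklength auxiliary function ω(m) = √(m / V(γ)) · (C(γ) − d/m) · ln 2 for blocklength m > 0, and the Gaussian Q-function Q(x) = ∫ₓ^∞ (1/√(2π)) e^{−t²/2} dt. Then the decoding error probability ε(m) = Q(ω(m)) is strictly monotonically decreasing in m on (0, ∞). -/
/-- The Gaussian Q-function `Q(x) = ∫ₓ^∞ (1/√(2π)) e^{−t²/2} dt`. -/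
noncomputable def gaussianQ (x : ℝ) : ℝ :=
  ∫ t in Set.Ioi x, (Real.sqrt (2 * Real.pi))⁻¹ * Real.exp (-t ^ 2 / 2)

/-- Shannon capacity `C(γ) = log₂(1+γ)`. -/
noncomputable def Cap (γ : ℝ) : ℝ := Real.logb 2 (1 + γ)

/-- Channel dispersion `V(γ) = 1 − (1+γ)^{−2}`. -/
noncomputable def Vdisp (γ : ℝ) : ℝ := 1 - ((1 + γ) ^ 2)⁻¹

/-- The finite-blocklength auxiliary function
`ω(m,γ) = √(m / V(γ)) · (C(γ) − d/m) · ln 2`. -/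
noncomputable def ωfbl (d γ m : ℝ) : ℝ :=
  Real.sqrt (m / Vdisp γ) * (Cap γ - d / m) * Real.log 2

lemma gauss_integrable :
    MeasureTheory.Integrable (fun t : ℝ => (Real.sqrt (2 * Real.pi))⁻¹ * Real.exp (-t ^ 2 / 2)) := by
  have h := (integrable_exp_neg_mul_sq (by norm_num : (0:ℝ) < 1/2)).const_mul
      (Real.sqrt (2 * Real.pi))⁻¹
  convert h using 2 with t
  ring_nf

lemma gaussianQ_strictAnti : StrictAnti gaussianQ := by
  intro x y hxy
  have hmeas : MeasurableSet (Set.Ioi y) := measurableSet_Ioi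
  have hdisj : Disjoint (Set.Ioc x y) (Set.Ioi y) := Set.Ioc_disjoint_Ioi le_rfl
  have hunion : Set.Ioc x y ∪ Set.Ioi y = Set.Ioi x := Set.Ioc_union_Ioi_eq_Ioi hxy.le
  have hint := gauss_integrable
  have hsplit : gaussianQ x =
      (∫ t in Set.Ioc x y, (Real.sqrt (2 * Real.pi))⁻¹ * Real.exp (-t ^ 2 / 2)) + gaussianQ y := by
    rw [gaussianQ, gaussianQ, ← hunion,
      MeasureTheory.setIntegral_union hdisj hmeas hint.integrableOn hint.integrableOn]
  have hpos : 0 < ∫ t in Set.Ioc x y, (Real.sqrt (2 * Real.pi))⁻¹ * Real.exp (-t ^ 2 / 2) := by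
    rw [← intervalIntegral.integral_of_le hxy.le]
    apply intervalIntegral.intervalIntegral_pos_of_pos
    · exact hint.intervalIntegrable
    · intro t
      positivity
    · exact hxy
  linarith [hsplit]

lemma omega_strictMono (d γ : ℝ) (hd : 0 < d) (hγ : 0 < γ) :
    StrictMonoOn (fun m => ωfbl d γ m) (Set.Ioi (0 : ℝ)) := by
  have hV : 0 < Vdisp γ := by
    have h1 : (1:ℝ) < (1 + γ) ^ 2 := by nlinarith
    have : ((1 + γ) ^ 2)⁻¹ < 1 := by
      rw [inv_lt_one_iff₀]; right; exact h1
    unfold Vdisp; linarith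
  have hC : 0 < Cap γ := Real.logb_pos (by norm_num) (by linarith)
  have hL : 0 < Real.log 2 := Real.log_pos (by norm_num)
  have key : ∀ m ∈ Set.Ioi (0:ℝ), ωfbl d γ m =
      (Cap γ * Real.sqrt m - d / Real.sqrt m) / Real.sqrt (Vdisp γ) * Real.log 2 := by
    intro m hm
    have hm0 : (0:ℝ) < m := hm
    have hsm : 0 < Real.sqrt m := Real.sqrt_pos.mpr hm0
    have hmm : Real.sqrt m * Real.sqrt m = m := Real.mul_self_sqrt hm0.le
    have hsV : 0 < Real.sqrt (Vdisp γ) := Real.sqrt_pos.mpr hV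
    unfold ωfbl
    rw [Real.sqrt_div hm0.le, div_mul_eq_mul_div]
    have hinner : Real.sqrt m * (Cap γ - d / m) = Cap γ * Real.sqrt m - d / Real.sqrt m := by
      field_simp
      nlinarith [hmm]
    rw [hinner]
  intro a ha b hb hab
  show ωfbl d γ a < ωfbl d γ b
  rw [key a ha, key b hb]
  have hsa : 0 < Real.sqrt a := Real.sqrt_pos.mpr ha
  have hsb : 0 < Real.sqrt b := Real.sqrt_pos.mpr hb
  have hsab : Real.sqrt a < Real.sqrt b := Real.sqrt_lt_sqrt (le_of_lt ha) hab
  have hsV : 0 < Real.sqrt (Vdisp γ) := Real.sqrt_pos.mpr hV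
  have hdd : d / Real.sqrt b < d / Real.sqrt a := div_lt_div_of_pos_left hd hsa hsab
  have h1 : Cap γ * Real.sqrt a - d / Real.sqrt a < Cap γ * Real.sqrt b - d / Real.sqrt b := by
    nlinarith
  exact mul_lt_mul_of_pos_right (div_lt_div_of_pos_right h1 hsV) hL

/-- For fixed packet size `d > 0` and SNR `γ > 0`, the FBL decoding error
probability `ε(m) = Q(ω(m))` is strictly monotonically decreasing in the blocklength `m`
on `(0, ∞)`. -/
theorem statement0 (d γ : ℝ) (hd : 0 < d) (hγ : 0 < γ) :
    StrictAntiOn (fun m => gaussianQ (ωfbl d γ m)) (Set.Ioi (0 : ℝ)) := by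
  intro a ha b hb hab
  exact gaussianQ_strictAnti (omega_strictMono d γ hd hγ ha hb hab)
end

section
/- Fix a packet size d > 0. The finite-blocklength auxiliary function ω(m,γ) = √(m / V(γ)) · (C(γ) − d/m) · ln 2, with C(γ) = log₂(1+γ) and V(γ) = 1 − (1+γ)^{−2}, is strictly increasing in m on (0, ∞) for each fixed γ > 0, and strictly increasing in γ on (0, ∞) for each fixed m > 0. In particular its partial derivative with respect to m equals (ln 2 / 2) · m^{−1/2} · V(γ)^{−1/2} · (C(γ) + d/m) > 0. -/
/-!
For fixed `γ`, `√m · (C − d/m) = C √m − d / √m`, whose derivative `(C + d/m) / (2√m)` is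
positive. For fixed `m`, with `c = d/m ≥ 0`, the derivative of `(C(γ) − c) / √V(γ)` has the sign of
`(1+γ)² − 1 − (C(γ) − c) ln 2 ≥ (1+γ)² − 1 − ln(1+γ)`, which is positive because
`ln(1+γ) ≤ γ < (1+γ)² − 1`.
-/

open Real Set

lemma strictMonoOn_of_hasDerivAt_pos {D : Set ℝ} (hD : Convex ℝ D)
    {f f' : ℝ → ℝ} (hf : ∀ x ∈ D, HasDerivAt f (f' x) x) (hf' : ∀ x ∈ D, 0 < f' x) :
    StrictMonoOn f D :=
  strictMonoOn_of_hasDerivWithinAt_pos hD (fun x hx => (hf x hx).continuousAt.continuousWithinAt)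
    (fun x hx => (hf x (interior_subset hx)).hasDerivWithinAt)
    fun x hx => hf' x (interior_subset hx)

lemma Cap_pos {γ : ℝ} (hγ : 0 < γ) : 0 < Cap γ :=
  logb_pos one_lt_two (by linarith)

lemma Vdisp_pos {γ : ℝ} (hγ : 0 < γ) : 0 < Vdisp γ := by
  have : 1 < (1 + γ) ^ 2 := by nlinarith
  simpa [Vdisp] using inv_lt_one_of_one_lt₀ this

lemma hasDerivAt_Cap {γ : ℝ} (hγ : 1 + γ ≠ 0) :
    HasDerivAt Cap (1 / ((1 + γ) * log 2)) γ :=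
  ((((hasDerivAt_id γ).const_add 1).log hγ).div_const (log 2)).congr_deriv
    (by simp only [id, div_div])

lemma hasDerivAt_Vdisp {γ : ℝ} (hγ : 1 + γ ≠ 0) :
    HasDerivAt Vdisp (2 / (1 + γ) ^ 3) γ :=
  (((((hasDerivAt_id γ).const_add 1).pow 2).inv (pow_ne_zero 2 hγ)).const_sub 1).congr_deriv
    (by simp only [id, Pi.pow_apply]; field_simp; ring)

lemma hasDerivAt_Cap_sub_div_sqrt_Vdisp (c : ℝ) {γ : ℝ} (hγ : 0 < γ) :
    HasDerivAt (fun γ => (Cap γ - c) / √(Vdisp γ))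
      (((1 + γ) ^ 2 - 1 - (Cap γ - c) * log 2) / (log 2 * (1 + γ) ^ 3 * √(Vdisp γ) ^ 3)) γ := by
  have h1 : 1 + γ ≠ 0 := by positivity
  have hV := Vdisp_pos hγ
  have hsV : 0 < √(Vdisp γ) := sqrt_pos.2 hV
  refine (((hasDerivAt_Cap h1).sub_const c).div ((hasDerivAt_Vdisp h1).sqrt hV.ne')
    hsV.ne').congr_deriv ?_
  have hV2 : √(Vdisp γ) ^ 2 * (1 + γ) ^ 2 = (1 + γ) ^ 2 - 1 := by
    rw [sq_sqrt hV.le, Vdisp]; field_simp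
  have := log_pos one_lt_two
  field_simp
  linear_combination hV2

lemma log_two_mul_Cap_sub_lt {γ c : ℝ} (hγ : 0 < γ) (hc : 0 ≤ c) :
    (Cap γ - c) * log 2 < (1 + γ) ^ 2 - 1 := by
  have hlog := log_le_sub_one_of_pos (by linarith : 0 < 1 + γ)
  have : Cap γ * log 2 = log (1 + γ) := div_mul_cancel₀ _ (log_pos one_lt_two).ne'
  nlinarith [log_pos one_lt_two]

lemma strictMonoOn_Cap_sub_div_sqrt_Vdisp {c : ℝ} (hc : 0 ≤ c) :
    StrictMonoOn (fun γ => (Cap γ - c) / √(Vdisp γ)) (Ioi 0) :=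
  strictMonoOn_of_hasDerivAt_pos (convex_Ioi 0)
    (fun _ hγ => hasDerivAt_Cap_sub_div_sqrt_Vdisp c hγ) fun γ (hγ : 0 < γ) => by
      have := sqrt_pos.2 (Vdisp_pos hγ)
      have := log_pos one_lt_two
      have := log_two_mul_Cap_sub_lt hγ hc
      exact div_pos (by linarith) (by positivity)

lemma hasDerivAt_sqrt_mul_sub_div (a b : ℝ) {x : ℝ} (hx : 0 < x) :
    HasDerivAt (fun x => √x * (a - b / x)) ((a + b / x) / (2 * √x)) x := by
  have hs := sqrt_pos.2 hx
  refine ((hasDerivAt_sqrt hx.ne').mul (((hasDerivAt_inv hx.ne').const_mul b).const_sub a))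
    |>.congr_deriv ?_
  have := sq_sqrt hx.le
  field_simp
  linear_combination 2 * b * this

lemma ωfbl_eq_of_Vdisp_nonneg (d : ℝ) {γ : ℝ} (hV : 0 ≤ Vdisp γ) :
    (fun m => ωfbl d γ m) = fun m => log 2 / √(Vdisp γ) * (√m * (Cap γ - d / m)) := by
  funext m
  rw [ωfbl, sqrt_div' _ hV]
  ring

lemma ωfbl_eq_of_nonneg (d : ℝ) {m : ℝ} (hm : 0 ≤ m) :
    (fun γ => ωfbl d γ m) = fun γ => √m * log 2 * ((Cap γ - d / m) / √(Vdisp γ)) := by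
  funext γ
  rw [ωfbl, sqrt_div hm]
  ring

lemma hasDerivAt_ωfbl_blocklength (d : ℝ) {γ m : ℝ} (hV : 0 ≤ Vdisp γ) (hm : 0 < m) :
    HasDerivAt (fun m => ωfbl d γ m)
      (log 2 / 2 * (√m)⁻¹ * (√(Vdisp γ))⁻¹ * (Cap γ + d / m)) m := by
  rw [ωfbl_eq_of_Vdisp_nonneg d hV]
  refine ((hasDerivAt_sqrt_mul_sub_div (Cap γ) d hm).const_mul _).congr_deriv ?_
  ring

/-- For fixed `d > 0`, `ω(m,γ)` is strictly increasing in `m` on `(0,∞)`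
for each `γ > 0`, strictly increasing in `γ` on `(0,∞)` for each `m > 0`, and its
partial derivative with respect to `m` equals
`(ln 2 / 2) · m^{−1/2} · V(γ)^{−1/2} · (C(γ) + d/m) > 0`. -/
theorem statement2 (d : ℝ) (hd : 0 < d) :
    (∀ γ > (0 : ℝ), StrictMonoOn (fun m => ωfbl d γ m) (Set.Ioi (0 : ℝ))) ∧
    (∀ m > (0 : ℝ), StrictMonoOn (fun γ => ωfbl d γ m) (Set.Ioi (0 : ℝ))) ∧
    (∀ γ > (0 : ℝ), ∀ m > (0 : ℝ),
      HasDerivAt (fun m => ωfbl d γ m)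
        (Real.log 2 / 2 * (Real.sqrt m)⁻¹ * (Real.sqrt (Vdisp γ))⁻¹ * (Cap γ + d / m)) m ∧
      0 < Real.log 2 / 2 * (Real.sqrt m)⁻¹ * (Real.sqrt (Vdisp γ))⁻¹ * (Cap γ + d / m)) := by
  have hlog2 := log_pos one_lt_two
  have hderiv_pos : ∀ γ > (0 : ℝ), ∀ m > (0 : ℝ),
      0 < log 2 / 2 * (√m)⁻¹ * (√(Vdisp γ))⁻¹ * (Cap γ + d / m) := fun γ hγ m hm => by
    have := Cap_pos hγ
    have := sqrt_pos.2 (Vdisp_pos hγ)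
    have := sqrt_pos.2 hm
    have := div_pos hd hm
    positivity
  refine ⟨fun γ hγ => ?_, fun m hm => ?_, fun γ hγ m hm =>
    ⟨hasDerivAt_ωfbl_blocklength d (Vdisp_pos hγ).le hm, hderiv_pos γ hγ m hm⟩⟩
  · exact strictMonoOn_of_hasDerivAt_pos (convex_Ioi 0)
      (fun m hm => hasDerivAt_ωfbl_blocklength d (Vdisp_pos hγ).le hm) (hderiv_pos γ hγ)
  · have hscale : 0 < √m * log 2 := mul_pos (sqrt_pos.2 hm) hlog2
    rw [ωfbl_eq_of_nonneg d hm.le]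
    exact fun γ hγ γ' hγ' hlt => mul_lt_mul_of_pos_left
      (strictMonoOn_Cap_sub_div_sqrt_Vdisp (div_pos hd hm).le hγ hγ' hlt) hscale
end

section
/- Let Q(x) = ∫ₓ^∞ (1/√(2π)) e^{−t²/2} dt and fix ω̂ ∈ ℝ. Define a(ω̂) = max{ e^{−ω̂²/2} / (√(2π) Q(ω̂)), ω̂ }, b(ω̂) = (1/(√(2π) a(ω̂))) · e^{a(ω̂)ω̂ − ω̂²/2}, and c(ω̂) = Q(ω̂) − b(ω̂) e^{−a(ω̂)ω̂}. Then a(ω̂) > 0, b(ω̂) > 0, and for every ω ∈ ℝ one has Q(ω) ≤ b(ω̂) e^{−a(ω̂)ω} + c(ω̂), with equality at ω = ω̂. -/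
/-- `a(u) = max{ e^{−u²/2} / (√(2π) Q(u)), u }`. -/
noncomputable def aQ (u : ℝ) : ℝ :=
  max (Real.exp (-u ^ 2 / 2) / (Real.sqrt (2 * Real.pi) * gaussianQ u)) u

/-- `b(u) = (1/(√(2π) a(u))) · e^{a(u)·u − u²/2}`. -/
noncomputable def bQ (u : ℝ) : ℝ :=
  (Real.sqrt (2 * Real.pi) * aQ u)⁻¹ * Real.exp (aQ u * u - u ^ 2 / 2)

/-- `c(u) = Q(u) − b(u) e^{−a(u)·u}`. -/
noncomputable def cQ (u : ℝ) : ℝ := gaussianQ u - bQ u * Real.exp (-aQ u * u)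

/-!
The bound is `Q ≤ M`, where `M(x) = Q(u) + (φ(u)/a)(e^{-a(x-u)} - 1)` is the exponential curve
through `(u, Q(u))` with the same slope `-φ(u)` there. The gap `g = M - Q` has derivative
`g'(x) = φ(x) (1 - e^{(x-u)(x+u-2a)/2})`, so for `u ≤ a` it decreases on `(-∞, u]`, increases on
`[u, 2a - u]` and decreases on `[2a - u, ∞)` towards `Q(u) - φ(u)/a`. Hence `g ≥ 0` as soon as this
limit is nonnegative, i.e. `a ≥ φ(u)/Q(u)`, which is what the choice of `a(u)` guarantees.
-/

open Real MeasureTheory Set Filter Topology ProbabilityTheory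

theorem hasDerivAt_integral_Ioi {f : ℝ → ℝ} (hf : Integrable f) (hcont : Continuous f) (x : ℝ) :
    HasDerivAt (fun y => ∫ t in Ioi y, f t) (-f x) x := by
  have hsplit : (fun y => ∫ t in Ioi y, f t) = fun y => (∫ t in Ioi 0, f t) - ∫ t in 0..y, f t :=
    funext fun y => by
      rw [← intervalIntegral.integral_Ioi_sub_Ioi' hf.integrableOn hf.integrableOn, sub_sub_cancel]
  rw [hsplit]
  exact (intervalIntegral.integral_hasDerivAt_right hf.intervalIntegrable
    (hcont.stronglyMeasurableAtFilter _ _) hcont.continuousAt).const_sub _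

local notation "φ" => gaussianPDFReal 0 1

lemma gaussianPDFReal_zero_one (x : ℝ) : φ x = (√(2 * π))⁻¹ * exp (-x ^ 2 / 2) := by
  simp [gaussianPDFReal]

lemma continuous_gaussianPDFReal_zero_one : Continuous φ := by
  rw [funext gaussianPDFReal_zero_one]
  fun_prop

lemma gaussianPDFReal_mul_exp (a u x : ℝ) :
    φ u * exp (-a * (x - u)) = φ x * exp ((x - u) * (x + u - 2 * a) / 2) := by
  simp only [gaussianPDFReal_zero_one, mul_assoc, ← exp_add]
  ring_nf

lemma gaussianQ_eq_integral_gaussianPDFReal (x : ℝ) : gaussianQ x = ∫ t in Ioi x, φ t := by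
  simp only [gaussianQ, gaussianPDFReal_zero_one]

lemma gaussianQ_pos (x : ℝ) : 0 < gaussianQ x := by
  have hsupp : Function.support φ = univ :=
    Function.support_eq_univ fun t => (gaussianPDFReal_pos 0 1 t one_ne_zero).ne'
  rw [gaussianQ_eq_integral_gaussianPDFReal, setIntegral_pos_iff_support_of_nonneg_ae
    (ae_of_all _ (gaussianPDFReal_nonneg 0 1)) (integrable_gaussianPDFReal 0 1).integrableOn,
    hsupp, univ_inter]
  simp

lemma hasDerivAt_gaussianQ (x : ℝ) : HasDerivAt gaussianQ (-φ x) x := by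
  simp only [funext gaussianQ_eq_integral_gaussianPDFReal]
  exact hasDerivAt_integral_Ioi (integrable_gaussianPDFReal 0 1)
    continuous_gaussianPDFReal_zero_one x

lemma tendsto_gaussianQ_atTop : Tendsto gaussianQ atTop (𝓝 0) := by
  simp only [funext gaussianQ_eq_integral_gaussianPDFReal]
  exact tendsto_integral_Ioi_zero tendsto_id

noncomputable def expMajorant (a u x : ℝ) : ℝ :=
  gaussianQ u + φ u / a * (exp (-a * (x - u)) - 1)

lemma hasDerivAt_expMajorant_sub_gaussianQ {a : ℝ} (ha : a ≠ 0) (u y : ℝ) :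
    HasDerivAt (fun x => expMajorant a u x - gaussianQ x)
      (φ y * (1 - exp ((y - u) * (y + u - 2 * a) / 2))) y := by
  have hlin : HasDerivAt (fun x => -a * (x - u)) (-a) y := by
    simpa using ((hasDerivAt_id y).sub_const u).const_mul (-a)
  have h := ((((hlin.exp).sub_const 1).const_mul (φ u / a)).const_add (gaussianQ u)).sub
    (hasDerivAt_gaussianQ y)
  refine h.congr_deriv ?_
  rw [mul_sub (φ y), mul_one, ← gaussianPDFReal_mul_exp a]
  field_simp
  ring

lemma tendsto_expMajorant_sub_gaussianQ {a : ℝ} (ha : 0 < a) (u : ℝ) :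
    Tendsto (fun x => expMajorant a u x - gaussianQ x) atTop (𝓝 (gaussianQ u - φ u / a)) := by
  have hlin : Tendsto (fun x => -a * (x - u)) atTop atBot :=
    (tendsto_atTop_add_const_right _ (-u) tendsto_id).const_mul_atTop_of_neg (neg_lt_zero.2 ha)
  rw [show gaussianQ u - φ u / a = gaussianQ u + φ u / a * (0 - 1) - 0 by ring]
  exact ((tendsto_exp_atBot.comp hlin).sub_const 1 |>.const_mul (φ u / a)
    |>.const_add (gaussianQ u)).sub tendsto_gaussianQ_atTop

lemma gaussianQ_le_expMajorant {a u : ℝ} (ha : 0 < a) (hua : u ≤ a)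
    (hφ : φ u ≤ a * gaussianQ u) (x : ℝ) : gaussianQ x ≤ expMajorant a u x := by
  set g := fun x => expMajorant a u x - gaussianQ x with hg
  suffices 0 ≤ g x from sub_nonneg.1 this
  have hderiv := hasDerivAt_expMajorant_sub_gaussianQ ha.ne' u
  have hcont : Continuous g := continuous_iff_continuousAt.2 fun y => (hderiv y).continuousAt
  have hdecr : ∀ y, 0 ≤ (y - u) * (y + u - 2 * a) →
      φ y * (1 - exp ((y - u) * (y + u - 2 * a) / 2)) ≤ 0 := fun y hy =>
    mul_nonpos_of_nonneg_of_nonpos (gaussianPDFReal_nonneg 0 1 y)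
      (sub_nonpos.2 (one_le_exp (by positivity)))
  have hincr : ∀ y, (y - u) * (y + u - 2 * a) ≤ 0 →
      0 ≤ φ y * (1 - exp ((y - u) * (y + u - 2 * a) / 2)) := fun y hy =>
    mul_nonneg (gaussianPDFReal_nonneg 0 1 y) (sub_nonneg.2 (exp_le_one_iff.2 (by linarith)))
  have hgu : g u = 0 := by simp [hg, expMajorant]
  rcases le_total x u with hxu | hux
  · have hanti : AntitoneOn g (Iic u) :=
      antitoneOn_of_hasDerivWithinAt_nonpos (convex_Iic u) hcont.continuousOn
        (fun y _ => (hderiv y).hasDerivWithinAt) fun y hy => hdecr y <| by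
          rw [interior_Iic] at hy
          nlinarith [hy.out]
    exact hgu ▸ hanti hxu self_mem_Iic hxu
  rcases le_total x (2 * a - u) with hxa | hax
  · have hmono : MonotoneOn g (Icc u (2 * a - u)) :=
      monotoneOn_of_hasDerivWithinAt_nonneg (convex_Icc _ _) hcont.continuousOn
        (fun y _ => (hderiv y).hasDerivWithinAt) fun y hy => hincr y <| by
          rw [interior_Icc] at hy
          nlinarith [hy.1, hy.2]
    exact hgu ▸ hmono ⟨le_rfl, by linarith⟩ ⟨hux, hxa⟩ hux
  · have hanti : AntitoneOn g (Ici (2 * a - u)) :=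
      antitoneOn_of_hasDerivWithinAt_nonpos (convex_Ici _) hcont.continuousOn
        (fun y _ => (hderiv y).hasDerivWithinAt) fun y hy => hdecr y <| by
          rw [interior_Ici] at hy
          nlinarith [hy.out]
    have hlimit_nonneg : 0 ≤ gaussianQ u - φ u / a := sub_nonneg.2 ((div_le_iff₀' ha).2 hφ)
    refine hlimit_nonneg.trans (le_of_tendsto (tendsto_expMajorant_sub_gaussianQ ha u) ?_)
    filter_upwards [eventually_ge_atTop x] with y hy
    exact hanti hax (hax.trans hy) hy

lemma aQ_pos (u : ℝ) : 0 < aQ u :=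
  (div_pos (exp_pos _) (mul_pos (sqrt_pos.2 (by positivity)) (gaussianQ_pos u))).trans_le
    (le_max_left _ _)

lemma gaussianPDFReal_le_aQ_mul_gaussianQ (u : ℝ) : φ u ≤ aQ u * gaussianQ u := by
  rw [← div_le_iff₀ (gaussianQ_pos u), gaussianPDFReal_zero_one, inv_mul_eq_div, div_div]
  exact le_max_left _ _

lemma bQ_mul_exp (u x : ℝ) : bQ u * exp (-aQ u * x) = φ u / aQ u * exp (-aQ u * (x - u)) := by
  have hexp : exp (aQ u * u - u ^ 2 / 2) * exp (-aQ u * x)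
      = exp (-u ^ 2 / 2) * exp (-aQ u * (x - u)) := by
    rw [← exp_add, ← exp_add]
    ring_nf
  rw [bQ, gaussianPDFReal_zero_one, mul_assoc, hexp, mul_inv]
  ring

lemma expMajorant_aQ (u x : ℝ) : expMajorant (aQ u) u x = bQ u * exp (-aQ u * x) + cQ u := by
  rw [expMajorant, cQ, bQ_mul_exp, bQ_mul_exp, sub_self, mul_zero, exp_zero]
  ring

/-- paper's Lemma 3, upper bound: for every `ω̂ ∈ ℝ`, `a(ω̂) > 0`,
`b(ω̂) > 0`, and `Q(ω) ≤ b(ω̂) e^{−a(ω̂)ω} + c(ω̂)` for all `ω`, with equality at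
`ω = ω̂`. -/
theorem statement4 (w0 : ℝ) :
    0 < aQ w0 ∧ 0 < bQ w0 ∧
    (∀ ω : ℝ, gaussianQ ω ≤ bQ w0 * Real.exp (-aQ w0 * ω) + cQ w0) ∧
    gaussianQ w0 = bQ w0 * Real.exp (-aQ w0 * w0) + cQ w0 := by
  have ha := aQ_pos w0
  refine ⟨ha, mul_pos (inv_pos.2 (mul_pos (sqrt_pos.2 (by positivity)) ha)) (exp_pos _),
    fun ω => ?_, by rw [cQ]; ring⟩
  rw [← expMajorant_aQ]
  exact gaussianQ_le_expMajorant ha (le_max_right _ _) (gaussianPDFReal_le_aQ_mul_gaussianQ w0) ω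
end

section
/- Fix a packet size d > 0 and a blocklength m > 0, and let ω(γ) = √(m / V(γ)) · (C(γ) − d/m) · ln 2 with C(γ) = log₂(1+γ) and V(γ) = 1 − (1+γ)^{−2}. Then the second derivative of ω with respect to γ is nonpositive for all γ > 0; in particular, γ ↦ ω(γ) is concave on (0, ∞). -/
/-!
Substituting `x = 1 + γ` turns `ω` into `√m · f(x)`, where `f = omegaProfile c` is
`f(x) = x (ln x - c) / √(x² - 1)` and `c = (d / m) ln 2 > 0`. A direct computation gives
`f''(x) = -(x⁴ - 1 - 3x² ln x + 3c x²) / (x (x² - 1)^{5/2})`, and the numerator in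
parentheses is positive for `x > 1` because `3x² ln x ≤ 3x² (x - 1) ≤ x⁴ - 1`.
-/

open Real Set

lemma three_mul_sq_mul_log_le {x : ℝ} (hx : 1 ≤ x) : 3 * x ^ 2 * log x ≤ x ^ 4 - 1 := by
  have hlog : log x ≤ x - 1 := log_le_sub_one_of_pos (by linarith)
  have hx₀ : 0 ≤ x := by linarith
  -- `x⁴ - 1 - 3x²(x - 1) = (x - 1)(x(x - 1)² + 1)`
  nlinarith [mul_nonneg (sub_nonneg.2 hx) (mul_nonneg hx₀ (sq_nonneg (x - 1)))]

noncomputable def omegaProfile (c x : ℝ) : ℝ := x * (log x - c) / √(x ^ 2 - 1)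

noncomputable def omegaProfileDeriv (c x : ℝ) : ℝ :=
  (x ^ 2 - 1 + c - log x) / √(x ^ 2 - 1) ^ 3

noncomputable def omegaProfileDeriv2 (c x : ℝ) : ℝ :=
  -(x ^ 4 - 1 - 3 * x ^ 2 * log x + 3 * c * x ^ 2) / (x * √(x ^ 2 - 1) ^ 5)

section omegaProfile

variable (c : ℝ) {x : ℝ}

lemma hasDerivAt_sqrt_sq_sub_one (hx : 1 < x) :
    HasDerivAt (fun y => √(y ^ 2 - 1)) (x / √(x ^ 2 - 1)) x := by
  have hpos : 0 < x ^ 2 - 1 := by nlinarith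
  have hsqrt : √(x ^ 2 - 1) ≠ 0 := by positivity
  refine ((hasDerivAt_sqrt hpos.ne').comp x ((hasDerivAt_pow 2 x).sub_const 1)).congr_deriv ?_
  field_simp
  ring

lemma hasDerivAt_omegaProfile (hx : 1 < x) :
    HasDerivAt (omegaProfile c) (omegaProfileDeriv c x) x := by
  have hx₀ : 0 < x := by linarith
  have hpos : 0 < x ^ 2 - 1 := by nlinarith
  have hsqrt : √(x ^ 2 - 1) ≠ 0 := by positivity
  have hsq : √(x ^ 2 - 1) ^ 2 = x ^ 2 - 1 := sq_sqrt hpos.le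
  have hnum : HasDerivAt (fun y => y * (log y - c)) (1 * (log x - c) + x * x⁻¹) x :=
    (hasDerivAt_id x).mul ((hasDerivAt_log hx₀.ne').sub_const c)
  refine (hnum.div (hasDerivAt_sqrt_sq_sub_one hx) hsqrt).congr_deriv ?_
  unfold omegaProfileDeriv
  field_simp
  linear_combination (1 + log x - c) * hsq

lemma hasDerivAt_omegaProfileDeriv (hx : 1 < x) :
    HasDerivAt (omegaProfileDeriv c) (omegaProfileDeriv2 c x) x := by
  have hx₀ : 0 < x := by linarith
  have hpos : 0 < x ^ 2 - 1 := by nlinarith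
  have hsqrt : √(x ^ 2 - 1) ≠ 0 := by positivity
  have hsq : √(x ^ 2 - 1) ^ 2 = x ^ 2 - 1 := sq_sqrt hpos.le
  have hnum : HasDerivAt (fun y => y ^ 2 - 1 + c - log y) (2 * x - x⁻¹) x := by
    refine ((((hasDerivAt_pow 2 x).sub_const 1).add_const c).sub
      (hasDerivAt_log hx₀.ne')).congr_deriv ?_
    ring
  refine (hnum.div ((hasDerivAt_sqrt_sq_sub_one hx).pow 3) (pow_ne_zero 3 hsqrt)).congr_deriv ?_
  simp only [omegaProfileDeriv2, Pi.pow_apply]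
  field_simp
  linear_combination (2 * x ^ 2 - 1) * √(x ^ 2 - 1) ^ 2 * hsq

variable {c}

lemma omegaProfileDeriv2_nonpos (hc : 0 ≤ c) (hx : 1 < x) : omegaProfileDeriv2 c x ≤ 0 := by
  have hpos : 0 < x ^ 2 - 1 := by nlinarith
  refine div_nonpos_of_nonpos_of_nonneg ?_ (by positivity)
  nlinarith [three_mul_sq_mul_log_le hx.le, mul_nonneg hc (sq_nonneg x)]

lemma deriv_deriv_omegaProfile_nonpos (hc : 0 ≤ c) (hx : 1 < x) :
    deriv (deriv (omegaProfile c)) x ≤ 0 := by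
  have hderiv : EqOn (deriv (omegaProfile c)) (omegaProfileDeriv c) (Ioi 1) :=
    deriv_eqOn isOpen_Ioi fun _ hy => (hasDerivAt_omegaProfile c hy).hasDerivWithinAt
  rw [((hasDerivAt_omegaProfileDeriv c hx).congr_of_eventuallyEq
    (hderiv.eventuallyEq_of_mem (Ioi_mem_nhds hx))).deriv]
  exact omegaProfileDeriv2_nonpos hc hx

lemma concaveOn_omegaProfile (hc : 0 ≤ c) : ConcaveOn ℝ (Ioi 1) (omegaProfile c) := by
  refine concaveOn_of_hasDerivWithinAt2_nonpos (f' := omegaProfileDeriv c)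
    (f'' := omegaProfileDeriv2 c) (convex_Ioi 1)
    (fun y hy => (hasDerivAt_omegaProfile c hy).continuousAt.continuousWithinAt) ?_ ?_ ?_ <;>
    rw [interior_Ioi]
  · exact fun y hy => (hasDerivAt_omegaProfile c hy).hasDerivWithinAt
  · exact fun y hy => (hasDerivAt_omegaProfileDeriv c hy).hasDerivWithinAt
  · exact fun y hy => omegaProfileDeriv2_nonpos hc hy

end omegaProfile

lemma ωfbl_eq (d : ℝ) {m γ : ℝ} (hm : 0 < m) (hγ : 0 < γ) :
    ωfbl d γ m = √m * omegaProfile (d / m * log 2) (1 + γ) := by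
  have hpos : 0 < (1 + γ) ^ 2 - 1 := by nlinarith
  have hV : Vdisp γ = ((1 + γ) ^ 2 - 1) / (1 + γ) ^ 2 := by
    unfold Vdisp
    field_simp
  have hsqrt : √(m / Vdisp γ) = √m * (1 + γ) / √((1 + γ) ^ 2 - 1) := by
    rw [sqrt_div hm.le, hV, sqrt_div hpos.le, sqrt_sq (by linarith)]
    field_simp
  have hlog2 : log 2 ≠ 0 := (log_pos one_lt_two).ne'
  unfold ωfbl omegaProfile Cap
  rw [hsqrt, logb]
  field_simp

/-- For fixed `d > 0` and `m > 0`, the second derivative of `γ ↦ ω(γ)`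
is nonpositive for all `γ > 0`; in particular `γ ↦ ω(γ)` is concave on `(0, ∞)`. -/
theorem statement9 (d m : ℝ) (hd : 0 < d) (hm : 0 < m) :
    (∀ γ > (0 : ℝ), deriv (deriv (fun y => ωfbl d y m)) γ ≤ 0) ∧
    ConcaveOn ℝ (Set.Ioi (0 : ℝ)) (fun y => ωfbl d y m) := by
  set c := d / m * log 2
  have hc : 0 ≤ c := by positivity
  have hω : EqOn (fun y => ωfbl d y m) (fun y => √m * omegaProfile c (1 + y)) (Ioi 0) :=
    fun γ hγ => ωfbl_eq d hm hγ
  refine ⟨fun γ hγ => ?_, ?_⟩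
  · rw [(hω.deriv isOpen_Ioi).deriv isOpen_Ioi hγ]
    simp only [deriv_const_mul_field', deriv_comp_const_add]
    exact mul_nonpos_of_nonneg_of_nonpos (sqrt_nonneg m)
      (deriv_deriv_omegaProfile_nonpos hc (by linarith))
  · refine ConcaveOn.congr ?_ hω.symm
    simpa [Function.comp_def] using
      ((concaveOn_omegaProfile hc).translate_right 1).smul (sqrt_nonneg m)
end

section
/- Let I ⊆ ℝ be an interval and let f, g : I → ℝ be twice differentiable on I. Suppose f is convex on I with f′ ≤ 0 and f ≤ 1 on I, and g is concave on I with g′ ≤ 0 and g ≥ 0 on I. Then the function h(x) = f(x)·g(x) + (1 − g(x)) is convex on I. -/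
open Set Filter

/-- If `φ` is monotone on `s` and differentiable at an interior point `x` of `s`,
then `deriv φ x ≥ 0`. -/
lemma aux_deriv_nonneg_of_monotoneOn {φ : ℝ → ℝ} {s : Set ℝ} (hm : MonotoneOn φ s) {x : ℝ}
    (hx : x ∈ interior s) (hd : DifferentiableAt ℝ φ x) : 0 ≤ deriv φ x := by
  have h := hd.hasDerivAt
  rw [hasDerivAt_iff_tendsto_slope] at h
  refine ge_of_tendsto h ?_
  filter_upwards [self_mem_nhdsWithin,
    mem_nhdsWithin_of_mem_nhds (isOpen_interior.mem_nhds hx)] with y hy hys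
  have hxs : x ∈ s := interior_subset hx
  have hys' : y ∈ s := interior_subset hys
  have hyx : y ≠ x := hy
  rw [slope_def_field]
  rcases hyx.lt_or_gt with hlt | hlt
  · rw [div_nonneg_iff]
    right
    constructor
    · linarith [hm hys' hxs hlt.le]
    · linarith
  · apply div_nonneg
    · linarith [hm hxs hys' hlt.le]
    · linarith

/-- If `φ` is antitone on `s` and differentiable at an interior point `x` of `s`,
then `deriv φ x ≤ 0`. -/
lemma aux_deriv_nonpos_of_antitoneOn {φ : ℝ → ℝ} {s : Set ℝ} (hm : AntitoneOn φ s) {x : ℝ}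
    (hx : x ∈ interior s) (hd : DifferentiableAt ℝ φ x) : deriv φ x ≤ 0 := by
  have hm' : MonotoneOn (-φ) s := hm.neg
  have h0 : 0 ≤ deriv (-φ) x := aux_deriv_nonneg_of_monotoneOn hm' hx hd.neg
  have : deriv (-φ) x = -deriv φ x := hd.hasDerivAt.neg.deriv
  rw [this] at h0
  linarith

/-- abstract form of eq. (39) in the paper: let `I ⊆ ℝ` be an interval
(a convex set of reals) and `f, g : I → ℝ` twice differentiable on `I`. If `f` is
convex on `I` with `f′ ≤ 0` and `f ≤ 1` on `I`, and `g` is concave on `I` with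
`g′ ≤ 0` and `g ≥ 0` on `I`, then `h(x) = f(x)·g(x) + (1 − g(x))` is convex on `I`. -/
theorem statement14 (I : Set ℝ) (hI : Convex ℝ I) (f g : ℝ → ℝ)
    (hfd : ∀ x ∈ I, DifferentiableAt ℝ f x)
    (hfd2 : ∀ x ∈ I, DifferentiableAt ℝ (deriv f) x)
    (hgd : ∀ x ∈ I, DifferentiableAt ℝ g x)
    (hgd2 : ∀ x ∈ I, DifferentiableAt ℝ (deriv g) x)
    (hfconv : ConvexOn ℝ I f)
    (hf' : ∀ x ∈ I, deriv f x ≤ 0)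
    (hf1 : ∀ x ∈ I, f x ≤ 1)
    (hgconc : ConcaveOn ℝ I g)
    (hg' : ∀ x ∈ I, deriv g x ≤ 0)
    (hg0 : ∀ x ∈ I, 0 ≤ g x) :
    ConvexOn ℝ I (fun x => f x * g x + (1 - g x)) := by
  set h : ℝ → ℝ := fun x => f x * g x + (1 - g x) with hhdef
  set φ : ℝ → ℝ := fun y => deriv f y * g y + f y * deriv g y - deriv g y with hφdef
  have hmono : MonotoneOn (deriv f) I := hfconv.monotoneOn_deriv hfd
  have hanti : AntitoneOn (deriv g) I := hgconc.antitoneOn_deriv hgd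
  -- derivative formula on interior
  have hder : ∀ x ∈ interior I, deriv h x = φ x := by
    intro x hx
    have hfx := (hfd x (interior_subset hx)).hasDerivAt
    have hgx := (hgd x (interior_subset hx)).hasDerivAt
    have H : HasDerivAt h (deriv f x * g x + f x * deriv g x + (0 - deriv g x)) x :=
      (hfx.mul hgx).add ((hasDerivAt_const x (1 : ℝ)).sub hgx)
    rw [H.deriv]; simp [hφdef]; ring
  have heq : ∀ x ∈ interior I, deriv h =ᶠ[nhds x] φ := fun x hx =>
    Filter.eventuallyEq_of_mem (isOpen_interior.mem_nhds hx) (fun y hy => hder y hy)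
  have hφd : ∀ x ∈ interior I, DifferentiableAt ℝ φ x := by
    intro x hx
    have hxI := interior_subset hx
    exact (((hfd2 x hxI).mul (hgd x hxI)).add ((hfd x hxI).mul (hgd2 x hxI))).sub (hgd2 x hxI)
  apply convexOn_of_deriv2_nonneg hI
  · have hfc : ContinuousOn f I := fun x hx => (hfd x hx).continuousAt.continuousWithinAt
    have hgc : ContinuousOn g I := fun x hx => (hgd x hx).continuousAt.continuousWithinAt
    exact (hfc.mul hgc).add (continuousOn_const.sub hgc)
  · intro x hx
    have hxI := interior_subset hx
    exact (((hfd x hxI).mul (hgd x hxI)).add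
      ((differentiableAt_const (1 : ℝ)).sub (hgd x hxI))).differentiableWithinAt
  · intro x hx
    exact (((heq x hx).differentiableAt_iff).mpr (hφd x hx)).differentiableWithinAt
  · intro x hx
    have hxI := interior_subset hx
    have e2 : deriv^[2] h x = deriv (deriv h) x := rfl
    have e3 : deriv (deriv h) x = deriv φ x := (heq x hx).deriv_eq
    have Hφ : HasDerivAt φ
        ((deriv (deriv f) x * g x + deriv f x * deriv g x) +
          (deriv f x * deriv g x + f x * deriv (deriv g) x) - deriv (deriv g) x) x :=
      (((hfd2 x hxI).hasDerivAt.mul (hgd x hxI).hasDerivAt).add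
        ((hfd x hxI).hasDerivAt.mul (hgd2 x hxI).hasDerivAt)).sub (hgd2 x hxI).hasDerivAt
    rw [e2, e3, Hφ.deriv]
    have hf'' : 0 ≤ deriv (deriv f) x := aux_deriv_nonneg_of_monotoneOn hmono hx (hfd2 x hxI)
    have hg'' : deriv (deriv g) x ≤ 0 := aux_deriv_nonpos_of_antitoneOn hanti hx (hgd2 x hxI)
    nlinarith [mul_nonneg hf'' (hg0 x hxI),
      mul_nonneg (neg_nonneg.2 (hf' x hxI)) (neg_nonneg.2 (hg' x hxI)),
      mul_nonneg (sub_nonneg.2 (hf1 x hxI)) (neg_nonneg.2 hg'')]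
end
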